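/- Let ψ be any 2n-qubit hypermatrix (n ≥ 1) with vectorization |ψ⟩ ∈ ℂ^{4^n}. Then hdet(ψ̂) = ((−1)^n / 2) · |ψ⟩^T σ_y^{⊗2n} |ψ⟩. Equivalently, the symmetric matrix Ê_n of the quadratic form hdet satisfies Ê_n = ((−1)^n / 2) σ_y^{⊗2n}. -/

import Mathlib

/-!
Writing `x k = σ_k(0)`, the sum defining `hdet` runs over bit strings `x` with `x 0 = 0`, the
second entry is indexed by the complementary string `x̄`, and the sign is `∏ (-1)^{x_k}`.
Each row `x` of `σ_y^{⊗2n}` has a single nonzero entry, in column `x̄`, equal to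
`(-i)^{2n} ∏ (-1)^{x_k} = (-1)^n ∏ (-1)^{x_k}`. Hence `|ψ⟩ᵀ σ_y^{⊗2n} |ψ⟩` is `(-1)^n` times the
same sum taken over all `x`; as the summand is invariant under `x ↦ x̄` (the length `2n` is
even), this is twice `hdet`. Uniqueness of `Ê_n` is polarization: a symmetric matrix is
determined by its quadratic form once `2` is invertible.
-/

/-- The `k`-th bit (big-endian, `0`-based) of an index `j`, so that for `j < 2^n`,
`j = Σ_k (bit j k) · 2^{n-1-k}` (lexicographic order of bit strings). -/
def qbit (n : ℕ) (j : ℕ) (k : Fin n) : Fin 2 :=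
  ⟨j / 2 ^ (n - 1 - (k : ℕ)) % 2, by omega⟩

/-- The vectorization `|ψ⟩ ∈ ℂ^{4^n}` of a `2n`-qubit hypermatrix, listing the entries in
lexicographic order of the binary index `j = Σ_k i_k 2^{2n−k}`. -/
noncomputable def vecQ (n : ℕ) (ψ : (Fin (2 * n) → Fin 2) → ℂ) : Fin (4 ^ n) → ℂ :=
  fun j => ψ (qbit (2 * n) (j : ℕ))

/-- The second Pauli matrix `σ_y = [[0, −i], [i, 0]]`. -/
noncomputable def pauliY : Matrix (Fin 2) (Fin 2) ℂ :=
  !![0, -Complex.I; Complex.I, 0]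

/-- The `2n`-fold Kronecker power `σ_y^{⊗2n}` as a `4^n × 4^n` matrix
(indices encoded lexicographically by their `2n` bits). -/
noncomputable def pauliYPow (n : ℕ) : Matrix (Fin (4 ^ n)) (Fin (4 ^ n)) ℂ :=
  fun i j => ∏ k : Fin (2 * n), pauliY (qbit (2 * n) (i : ℕ) k) (qbit (2 * n) (j : ℕ) k)

/-- The combinatorial hyperdeterminant of an order-`N` side-2 hypermatrix:
`hdet H = Σ_{σ_2,...,σ_N ∈ S_2} (−1)^m H_{0σ_2(0)...σ_N(0)} H_{1σ_2(1)...σ_N(1)}`,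
where `m` is the number of the permutations `σ_2,...,σ_N` that are transpositions. -/
noncomputable def hdetQ (N : ℕ) (hN : 0 < N) (H : (Fin N → Fin 2) → ℂ) : ℂ :=
  ∑ σ : Fin N → Equiv.Perm (Fin 2),
    if σ ⟨0, hN⟩ = 1 then
      (∏ k, ((Equiv.Perm.sign (σ k) : ℤ) : ℂ)) *
        (H (fun k => σ k 0) * H (fun k => σ k 1))
    else 0

open Matrix

lemma Fintype.sum_eq_two_nsmul_sum_filter {α M : Type*} [Fintype α] [AddCommMonoid M]
    (e : α ≃ α) (p : α → Prop) [DecidablePred p] (f : α → M) (he : ∀ x, p (e x) ↔ ¬p x)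
    (hf : ∀ x, f (e x) = f x) : ∑ x, f x = 2 • ∑ x with p x, f x := by
  rw [← Finset.sum_filter_add_sum_filter_not Finset.univ p, two_nsmul]
  congr 1
  refine (Finset.sum_equiv e (fun x => ?_) fun x _ => (hf x).symm).symm
  simp [he]

lemma Matrix.IsSymm.ext_of_dotProduct_mulVec_self {m R : Type*} [Fintype m] [DecidableEq m]
    [CommRing R] [Invertible (2 : R)] {A B : Matrix m m R} (hA : A.IsSymm) (hB : B.IsSymm)
    (h : ∀ v, v ⬝ᵥ A *ᵥ v = v ⬝ᵥ B *ᵥ v) : A = B := by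
  have entry (M : Matrix m m R) (i j : m) : Pi.single i 1 ⬝ᵥ M *ᵥ Pi.single j 1 = M i j := by
    simp only [mulVec_single, MulOpposite.op_one, one_smul, single_dotProduct, col_apply, one_mul]
  ext i j
  have hii := h (Pi.single i 1)
  have hjj := h (Pi.single j 1)
  have hij := h (Pi.single i 1 + Pi.single j 1)
  simp only [mulVec_add, dotProduct_add, add_dotProduct, entry, hA.apply i j, hB.apply i j]
    at hii hjj hij
  exact (isUnit_of_invertible (2 : R)).mul_left_cancel (by linear_combination hij - hii - hjj)

lemma neg_one_pow_rev {R : Type*} [Monoid R] [HasDistribNeg R] (b : Fin 2) :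
    (-1 : R) ^ (b.rev : ℕ) = -(-1) ^ (b : ℕ) := by
  fin_cases b <;> simp

-- `finFunctionFinEquiv` reads digits little-endian, `qbit` big-endian.
noncomputable def qbitEquiv (N : ℕ) : Fin (2 ^ N) ≃ (Fin N → Fin 2) :=
  finFunctionFinEquiv.symm.trans (Equiv.arrowCongr Fin.revPerm (Equiv.refl _))

lemma qbit_eq_qbitEquiv (N : ℕ) (j : Fin (2 ^ N)) : qbit N j = qbitEquiv N j := by
  funext k
  ext
  simp only [qbitEquiv, qbit, finFunctionFinEquiv, Equiv.trans_apply, Equiv.arrowCongr_apply,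
    Equiv.coe_refl, Function.comp_apply, Equiv.ofRightInverseOfCardLE_symm_apply,
    Fin.revPerm_symm, Fin.revPerm_apply, id, Fin.val_rev]
  congr 3
  omega

lemma four_pow_eq_two_pow_two_mul (n : ℕ) : 4 ^ n = 2 ^ (2 * n) := by
  rw [pow_mul]; norm_num

noncomputable def bitsEquiv (n : ℕ) : Fin (4 ^ n) ≃ (Fin (2 * n) → Fin 2) :=
  (finCongr (four_pow_eq_two_pow_two_mul n)).trans (qbitEquiv (2 * n))

lemma qbit_eq_bitsEquiv (n : ℕ) (j : Fin (4 ^ n)) : qbit (2 * n) j = bitsEquiv n j :=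
  qbit_eq_qbitEquiv _ (finCongr (four_pow_eq_two_pow_two_mul n) j)

lemma vecQ_eq_comp (n : ℕ) (ψ : (Fin (2 * n) → Fin 2) → ℂ) : vecQ n ψ = ψ ∘ bitsEquiv n := by
  funext j
  exact congrArg ψ (qbit_eq_bitsEquiv n j)

noncomputable def pauliYTensor (N : ℕ) : Matrix (Fin N → Fin 2) (Fin N → Fin 2) ℂ :=
  fun x y => ∏ k, pauliY (x k) (y k)

lemma pauliYPow_eq_submatrix (n : ℕ) :
    pauliYPow n = (pauliYTensor (2 * n)).submatrix (bitsEquiv n) (bitsEquiv n) := by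
  ext i j
  simp only [pauliYPow, pauliYTensor, submatrix_apply, qbit_eq_bitsEquiv]

lemma vecQ_dotProduct_pauliYPow_mulVec (n : ℕ) (ψ : (Fin (2 * n) → Fin 2) → ℂ) :
    vecQ n ψ ⬝ᵥ pauliYPow n *ᵥ vecQ n ψ = ψ ⬝ᵥ pauliYTensor (2 * n) *ᵥ ψ := by
  rw [vecQ_eq_comp, pauliYPow_eq_submatrix, submatrix_mulVec_equiv, Function.comp_assoc,
    Equiv.self_comp_symm, Function.comp_id, comp_equiv_dotProduct_comp_equiv]

lemma pauliY_apply_swap (a b : Fin 2) : pauliY b a = -pauliY a b := by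
  fin_cases a <;> fin_cases b <;> simp [pauliY]

lemma pauliYTensor_isSymm {N : ℕ} (hN : Even N) : (pauliYTensor N).IsSymm := by
  ext x y
  calc ∏ k, pauliY (y k) (x k) = ∏ k, -pauliY (x k) (y k) :=
        Finset.prod_congr rfl fun k _ => pauliY_apply_swap _ _
    _ = ∏ k, pauliY (x k) (y k) := by
        rw [Finset.prod_neg, Finset.card_univ, Fintype.card_fin, hN.neg_one_pow, one_mul]

lemma pauliYPow_isSymm (n : ℕ) : (pauliYPow n).IsSymm := by
  rw [pauliYPow_eq_submatrix]
  exact (pauliYTensor_isSymm (even_two_mul n)).submatrix _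

lemma pauliY_apply_rev (b : Fin 2) : pauliY b b.rev = -Complex.I * (-1) ^ (b : ℕ) := by
  fin_cases b <;> simp [pauliY]

lemma pauliY_eq_zero_of_ne_rev {a b : Fin 2} (h : b ≠ a.rev) : pauliY a b = 0 := by
  fin_cases a <;> fin_cases b <;> simp_all [pauliY]

lemma pauliYTensor_apply (N : ℕ) (x y : Fin N → Fin 2) :
    pauliYTensor N x y =
      if y = Fin.rev ∘ x then (-Complex.I) ^ N * ∏ k, (-1 : ℂ) ^ (x k : ℕ) else 0 := by
  split_ifs with h
  · subst h
    simp only [pauliYTensor, Function.comp_apply, pauliY_apply_rev, Finset.prod_mul_distrib,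
      Finset.prod_const, Finset.card_univ, Fintype.card_fin]
  · obtain ⟨k, hk⟩ := Function.ne_iff.mp h
    exact Finset.prod_eq_zero (Finset.mem_univ k) (pauliY_eq_zero_of_ne_rev hk)

def permFinTwoEquiv : Equiv.Perm (Fin 2) ≃ Fin 2 where
  toFun σ := σ 0
  invFun b := if b = 0 then 1 else Equiv.swap 0 1
  left_inv := by decide
  right_inv := by decide

lemma Equiv.Perm.finTwo_apply_one (σ : Equiv.Perm (Fin 2)) : σ 1 = (σ 0).rev := by
  revert σ; decide

lemma Equiv.Perm.finTwo_eq_one_iff (σ : Equiv.Perm (Fin 2)) : σ = 1 ↔ σ 0 = 0 := by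
  revert σ; decide

lemma Equiv.Perm.sign_finTwo (σ : Equiv.Perm (Fin 2)) :
    (Equiv.Perm.sign σ : ℤ) = (-1) ^ (σ 0 : ℕ) := by
  revert σ; decide

noncomputable def hdetSummand {N : ℕ} (H : (Fin N → Fin 2) → ℂ) (x : Fin N → Fin 2) : ℂ :=
  (∏ k, (-1 : ℂ) ^ (x k : ℕ)) * (H x * H (Fin.rev ∘ x))

lemma hdetQ_eq_sum_hdetSummand (N : ℕ) (hN : 0 < N) (H : (Fin N → Fin 2) → ℂ) :
    hdetQ N hN H = ∑ x with x ⟨0, hN⟩ = 0, hdetSummand H x := by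
  rw [hdetQ, Finset.sum_filter]
  refine Fintype.sum_equiv (Equiv.piCongrRight fun _ => permFinTwoEquiv) _ _ fun σ => ?_
  simp only [Equiv.piCongrRight_apply, permFinTwoEquiv, Equiv.coe_fn_mk,
    Equiv.Perm.finTwo_eq_one_iff, Equiv.Perm.finTwo_apply_one,
    Equiv.Perm.sign_finTwo, hdetSummand]
  push_cast
  rfl

lemma hdetSummand_rev {N : ℕ} (hN : Even N) (H : (Fin N → Fin 2) → ℂ) (x : Fin N → Fin 2) :
    hdetSummand H (Fin.rev ∘ x) = hdetSummand H x := by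
  have sign_rev : ∏ k, (-1 : ℂ) ^ ((x k).rev : ℕ) = ∏ k, (-1 : ℂ) ^ (x k : ℕ) := by
    simp only [neg_one_pow_rev, Finset.prod_neg, Finset.card_univ, Fintype.card_fin,
      hN.neg_one_pow, one_mul]
  simp only [hdetSummand, Function.comp_apply, sign_rev, ← Function.comp_assoc]
  simp only [Function.comp_def, Fin.rev_rev]
  ring

lemma sum_hdetSummand {N : ℕ} (hN : Even N) (i : Fin N) (H : (Fin N → Fin 2) → ℂ) :
    ∑ x, hdetSummand H x = 2 * ∑ x with x i = 0, hdetSummand H x := by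
  rw [two_mul, ← two_nsmul]
  refine Fintype.sum_eq_two_nsmul_sum_filter (Equiv.piCongrRight fun _ => Fin.revPerm) _ _
    (fun x => ?_) (hdetSummand_rev hN H)
  show (x i).rev = 0 ↔ ¬x i = 0
  generalize x i = b
  revert b; decide

lemma dotProduct_pauliYTensor_mulVec (N : ℕ) (ψ : (Fin N → Fin 2) → ℂ) :
    ψ ⬝ᵥ pauliYTensor N *ᵥ ψ = (-Complex.I) ^ N * ∑ x, hdetSummand ψ x := by
  simp only [dotProduct, mulVec, pauliYTensor_apply, ite_mul, zero_mul, Finset.sum_ite_eq',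
    Finset.mem_univ, if_true, Finset.mul_sum, hdetSummand]
  refine Finset.sum_congr rfl fun x _ => ?_
  ring

lemma hdetQ_eq_dotProduct_pauliYTensor_mulVec (n : ℕ) (hn : 0 < 2 * n)
    (ψ : (Fin (2 * n) → Fin 2) → ℂ) :
    hdetQ (2 * n) hn ψ = ((-1 : ℂ) ^ n / 2) * (ψ ⬝ᵥ pauliYTensor (2 * n) *ᵥ ψ) := by
  have hI : (-Complex.I) ^ (2 * n) = (-1) ^ n := by rw [pow_mul, neg_sq, Complex.I_sq]
  rw [dotProduct_pauliYTensor_mulVec, sum_hdetSummand (even_two_mul n) ⟨0, hn⟩,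
    hdetQ_eq_sum_hdetSummand, hI]
  field_simp
  rw [← pow_mul, pow_mul', neg_one_sq, one_pow, mul_one]

/-- For any `2n`-qubit hypermatrix `ψ` (`n ≥ 1`),
`hdet(ψ̂) = ((−1)^n / 2) · |ψ⟩ᵀ σ_y^{⊗2n} |ψ⟩`; equivalently, the symmetric matrix `Ê_n` of
the quadratic form `hdet` satisfies `Ê_n = ((−1)^n / 2) σ_y^{⊗2n}`. -/
theorem hdet_eq_pauliYPow_quadform (n : ℕ) (hn : 1 ≤ n)
    (ψ : (Fin (2 * n) → Fin 2) → ℂ) :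
    hdetQ (2 * n) (by omega) ψ =
      ((-1 : ℂ) ^ n / 2) *
        dotProduct (vecQ n ψ) ((pauliYPow n).mulVec (vecQ n ψ)) ∧
      ∀ E : Matrix (Fin (4 ^ n)) (Fin (4 ^ n)) ℂ, E.IsSymm →
        (∀ φ : (Fin (2 * n) → Fin 2) → ℂ,
          dotProduct (vecQ n φ) (E.mulVec (vecQ n φ)) = hdetQ (2 * n) (by omega) φ) →
        E = ((-1 : ℂ) ^ n / 2) • pauliYPow n := by
  have hdet_eq (φ : (Fin (2 * n) → Fin 2) → ℂ) :
      hdetQ (2 * n) (by omega) φ =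
        ((-1 : ℂ) ^ n / 2) * (vecQ n φ ⬝ᵥ pauliYPow n *ᵥ vecQ n φ) := by
    rw [vecQ_dotProduct_pauliYPow_mulVec, hdetQ_eq_dotProduct_pauliYTensor_mulVec]
  refine ⟨hdet_eq ψ, fun E hE hEq => hE.ext_of_dotProduct_mulVec_self
    (by rw [IsSymm, transpose_smul, pauliYPow_isSymm]) fun v => ?_⟩
  obtain ⟨φ, rfl⟩ : ∃ φ, vecQ n φ = v := ⟨v ∘ (bitsEquiv n).symm, by
    rw [vecQ_eq_comp, Function.comp_assoc, Equiv.symm_comp_self, Function.comp_id]⟩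
  rw [hEq, hdet_eq, smul_mulVec, dotProduct_smul, smul_eq_mul]
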